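/- Let i, d, m be positive integers with m·d < i < m·(d+1). For s = 1, …, d define π_s : ℝ^i → ℂ by π_s(u_0, …, u_{i−1}) = ∑_{j=0}^{i−1} u_j · exp(2πi·sj/i). Let Δ^{i−m} ⊆ Δ^{i−1} be the convex hull of the vertices e_0, e_1, …, e_{i−m} (where e_j is the j-th standard basis vector), and let C_i act on Δ^{i−1} by cyclic permutation of coordinates. Then for every u in the C_i-orbit of Δ^{i−m}, the vector (π_1(u), …, π_d(u)) ∈ ℂ^d is nonzero. -/

import Mathlib

/-!
With `ζ = e^{2πi/i}`, factoring out `ζ^{sc}` removes the shift, and multiplying the points `ζ^j`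
by `e^{iπm/i}` places the support of `w` on points `y_j = e^{iπ(2j+m)/i}` with `Re y_j ≤ cos (πm/i) < cos (π/(d+1))`.
If the moments `∑ w_j y_j^s` vanished for `1 ≤ s ≤ d`, the monomials `1, y, …, y^d` would be
orthonormal for the weights `w`. For `P(y) = ∑_{k ≤ d} sin ((k+1)π/(d+1)) y^k` this gives
`∑ w_j Re(y_j) |P(y_j)|² = cos (π/(d+1)) ∑ w_j |P(y_j)|² > 0`, because the sine vector is an
eigenvector, with eigenvalue `2 cos (π/(d+1))`, of the adjacency operator of the path on `d`
vertices. So `Re y_j ≥ cos (π/(d+1))` for some `j` in the support of `w`, a contradiction.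
-/

open Complex Real Finset

open scoped ComplexConjugate

lemma pow_mul_conj_pow_of_le {z : ℂ} (hz : ‖z‖ = 1) {k l : ℕ} (hlk : l ≤ k) :
    z ^ k * conj z ^ l = z ^ (k - l) := by
  have hunit : z * conj z = 1 := by
    rw [Complex.mul_conj, Complex.normSq_eq_norm_sq, hz]; norm_num
  rw [← Nat.sub_add_cancel hlk, pow_add, mul_assoc, ← mul_pow, hunit, one_pow, mul_one,
    Nat.add_sub_cancel]

lemma mul_sum_range_succ_mul_pow {R : Type*} [CommSemiring R] (f : ℕ → R) {n : ℕ}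
    (h0 : f 0 = 0) (hn : f (n + 1) = 0) (x : R) :
    x * ∑ k ∈ range (n + 1), f (k + 1) * x ^ k = ∑ k ∈ range (n + 1), f k * x ^ k := by
  have h := sum_range_succ' (fun k => f k * x ^ k) (n + 1)
  rw [sum_range_succ, hn, h0] at h
  simp only [zero_mul, add_zero] at h
  rw [h, mul_sum]
  exact sum_congr rfl fun k _ => by ring

lemma sum_range_sin_mul_sin_succ {α : ℝ} {n : ℕ} (hn : Real.sin ((n + 1) * α) = 0) :
    ∑ k ∈ range (n + 1), Real.sin (k * α) * Real.sin ((k + 1) * α) =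
      Real.cos α * ∑ k ∈ range (n + 1), Real.sin ((k + 1) * α) ^ 2 := by
  have hshift : ∑ k ∈ range (n + 1), Real.sin ((k + 1) * α) * Real.sin ((k + 1 + 1) * α) =
      ∑ k ∈ range (n + 1), Real.sin (k * α) * Real.sin ((k + 1) * α) := by
    have h := sum_range_succ' (fun k : ℕ => Real.sin (k * α) * Real.sin ((k + 1) * α)) (n + 1)
    rw [sum_range_succ] at h
    push_cast at h
    simp only [hn, zero_mul, add_zero, Real.sin_zero] at h
    exact h.symm
  have hterm : ∀ k : ℕ, Real.sin (k * α) * Real.sin ((k + 1) * α) +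
      Real.sin ((k + 1) * α) * Real.sin ((k + 1 + 1) * α) =
        2 * Real.cos α * Real.sin ((k + 1) * α) ^ 2 := by
    intro k
    have h₁ : (k : ℝ) * α = (k + 1) * α - α := by ring
    have h₂ : ((k : ℝ) + 1 + 1) * α = (k + 1) * α + α := by ring
    rw [h₁, h₂, Real.sin_sub, Real.sin_add]
    ring
  have hsum := sum_congr rfl fun k (_ : k ∈ range (n + 1)) => hterm k
  rw [sum_add_distrib, hshift, ← mul_sum] at hsum
  linarith

lemma exists_pos_and_le_of_sum_mul_eq {ι : Type*} [Fintype ι] {v x : ι → ℝ} {c : ℝ}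
    (hv : ∀ j, 0 ≤ v j) (hpos : 0 < ∑ j, v j) (h : ∑ j, v j * x j = c * ∑ j, v j) :
    ∃ j, 0 < v j ∧ c ≤ x j := by
  by_contra! H
  obtain ⟨j₀, -, hj₀⟩ :=
    exists_lt_of_sum_lt (by simpa using hpos : ∑ _j : ι, (0 : ℝ) < ∑ j, v j)
  have hlt : ∑ j, v j * x j < ∑ j, v j * c := by
    refine sum_lt_sum (fun j _ => ?_) ⟨j₀, mem_univ _, by gcongr; exact H j₀ hj₀⟩
    rcases (hv j).eq_or_lt with h0 | hvj
    · simp [← h0]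
    · exact mul_le_mul_of_nonneg_left (H j hvj).le (hv j)
  rw [← sum_mul] at hlt
  linarith

section Moments

variable {ι : Type*} [Fintype ι] {w : ι → ℝ} {z : ι → ℂ} {d : ℕ}

lemma sum_mul_pow_mul_conj_pow (hw1 : ∑ j, w j = 1) (hz : ∀ j, ‖z j‖ = 1)
    (hmom : ∀ n, 1 ≤ n → n ≤ d → ∑ j, (w j : ℂ) * z j ^ n = 0)
    {k l : ℕ} (hk : k ≤ d) (hl : l ≤ d) :
    ∑ j, (w j : ℂ) * (z j ^ k * conj (z j) ^ l) = if k = l then 1 else 0 := by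
  have key : ∀ k l, k ≤ d → l ≤ k →
      ∑ j, (w j : ℂ) * (z j ^ k * conj (z j) ^ l) = if k = l then 1 else 0 := by
    intro k l hk hlk
    simp_rw [pow_mul_conj_pow_of_le (hz _) hlk]
    split_ifs with hkl
    · simp [hkl, ← ofReal_sum, hw1]
    · exact hmom _ (by omega) (by omega)
  rcases le_total l k with hlk | hkl
  · exact key k l hk hlk
  · have h := congrArg conj (key l k hl hkl)
    simp only [map_sum, map_mul, map_pow, conj_ofReal, conj_conj, apply_ite conj, map_one,
      map_zero] at h
    simpa [mul_comm, eq_comm] using h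

lemma sum_mul_poly_mul_conj_poly (hw1 : ∑ j, w j = 1) (hz : ∀ j, ‖z j‖ = 1)
    (hmom : ∀ n, 1 ≤ n → n ≤ d → ∑ j, (w j : ℂ) * z j ^ n = 0) (a c : ℕ → ℂ) :
    ∑ j, (w j : ℂ) * ((∑ k ∈ range (d + 1), a k * z j ^ k) *
        conj (∑ l ∈ range (d + 1), c l * z j ^ l)) =
      ∑ k ∈ range (d + 1), a k * conj (c k) := by
  have hexpand : ∀ j, (w j : ℂ) * ((∑ k ∈ range (d + 1), a k * z j ^ k) *
        conj (∑ l ∈ range (d + 1), c l * z j ^ l)) =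
      ∑ k ∈ range (d + 1), ∑ l ∈ range (d + 1),
        a k * conj (c l) * ((w j : ℂ) * (z j ^ k * conj (z j) ^ l)) := by
    intro j
    simp only [map_sum, map_mul, map_pow]
    rw [sum_mul_sum, mul_sum]
    exact sum_congr rfl fun k _ => by rw [mul_sum]; exact sum_congr rfl fun l _ => by ring
  simp_rw [hexpand]
  rw [sum_comm]
  refine sum_congr rfl fun k hk => ?_
  rw [sum_comm]
  simp_rw [← mul_sum]
  rw [mem_range] at hk
  have hkl : ∀ l ∈ range (d + 1), a k * conj (c l) *
      ∑ j, (w j : ℂ) * (z j ^ k * conj (z j) ^ l) = if k = l then a k * conj (c l) else 0 := by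
    intro l hl
    rw [mem_range] at hl
    rw [sum_mul_pow_mul_conj_pow hw1 hz hmom (by omega) (by omega)]
    split_ifs <;> simp
  rw [sum_congr rfl hkl, sum_ite_eq, if_pos (mem_range.mpr hk)]

theorem exists_weight_ne_zero_cos_le_re (hd : 0 < d) (hw : w ∈ stdSimplex ℝ ι)
    (hz : ∀ j, ‖z j‖ = 1)
    (hmom : ∀ n, 1 ≤ n → n ≤ d → ∑ j, (w j : ℂ) * z j ^ n = 0) :
    ∃ j, w j ≠ 0 ∧ Real.cos (π / (d + 1)) ≤ (z j).re := by
  set α := π / (d + 1)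
  have hα : 0 < α ∧ α < π := by
    have : (1 : ℝ) < d + 1 := by norm_num [hd]
    exact ⟨by positivity, div_lt_self pi_pos this⟩
  have hdα : Real.sin ((d + 1) * α) = 0 := by
    rw [show ((d : ℝ) + 1) * α = π by simp only [α]; field_simp, Real.sin_pi]
  set f : ℕ → ℂ := fun k => (Real.sin (k * α) : ℂ)
  set P : ι → ℂ := fun j => ∑ k ∈ range (d + 1), f (k + 1) * z j ^ k
  have hzP : ∀ j, z j * P j = ∑ k ∈ range (d + 1), f k * z j ^ k := fun j =>
    mul_sum_range_succ_mul_pow f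
      (by simp only [f, Nat.cast_zero, zero_mul, Real.sin_zero, ofReal_zero])
      (by simp only [f, Nat.cast_succ, hdα, ofReal_zero]) (z j)
  have hnorm :
      ∑ j, w j * normSq (P j) = ∑ k ∈ range (d + 1), Real.sin ((k + 1) * α) ^ 2 := by
    have h : ∑ j, (w j : ℂ) * (P j * conj (P j)) =
        ∑ k ∈ range (d + 1), f (k + 1) * conj (f (k + 1)) :=
      sum_mul_poly_mul_conj_poly hw.2 hz hmom _ _
    simp only [mul_conj, f, conj_ofReal, ← ofReal_mul, ← ofReal_sum, ofReal_inj] at h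
    simpa only [← sq, Nat.cast_succ] using h
  have hre : ∑ j, w j * normSq (P j) * (z j).re = Real.cos α * ∑ j, w j * normSq (P j) := by
    have h : ∑ j, (w j : ℂ) * (z j * P j * conj (P j)) =
        ∑ k ∈ range (d + 1), f k * conj (f (k + 1)) := by
      simp only [hzP]
      exact sum_mul_poly_mul_conj_poly hw.2 hz hmom _ _
    simp only [mul_assoc, mul_conj, f, conj_ofReal, ← ofReal_mul, ← ofReal_sum] at h
    have h' := congrArg re h
    simp only [re_sum, re_ofReal_mul, re_mul_ofReal, ofReal_re, Nat.cast_succ] at h'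
    rw [hnorm, ← sum_range_sin_mul_sin_succ hdα, ← h']
    exact sum_congr rfl fun j _ => by ring
  have hpos : 0 < ∑ j, w j * normSq (P j) := by
    rw [hnorm]
    refine sum_pos' (fun k _ => sq_nonneg _) ⟨0, mem_range.mpr (Nat.succ_pos d), ?_⟩
    simpa using pow_pos (sin_pos_of_pos_of_lt_pi hα.1 hα.2) 2
  obtain ⟨j, hj, hle⟩ := exists_pos_and_le_of_sum_mul_eq
    (fun j => mul_nonneg (hw.1 j) (normSq_nonneg (P j))) hpos hre
  exact ⟨j, fun h => by simp [h] at hj, hle⟩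

end Moments

lemma sum_comp_sub_mul_pow {R : Type*} [CommSemiring R] {i : ℕ} {ζ : R} (hζ : ζ ^ i = 1)
    (a : Fin i → R) (c : Fin i) :
    ∑ j, a (j - c) * ζ ^ (j : ℕ) = ζ ^ (c : ℕ) * ∑ j, a j * ζ ^ (j : ℕ) := by
  have : NeZero i := NeZero.of_pos c.pos
  rw [← Equiv.sum_comp (Equiv.addRight c) (fun j => a (j - c) * ζ ^ (j : ℕ)), mul_sum]
  refine sum_congr rfl fun j _ => ?_
  rw [Equiv.coe_addRight, add_sub_cancel_right, Fin.val_add, ← pow_eq_pow_mod _ hζ, pow_add]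
  ring

lemma exp_two_pi_mul_I_mul_div_eq_pow (i s j : ℕ) :
    exp (2 * π * I * s * j / i) = exp (2 * π * I * s / i) ^ j := by
  rw [← Complex.exp_nat_mul]; ring_nf

lemma sum_mul_exp_pow_eq_zero_of_sum_comp_sub {i : ℕ} (m n : ℕ) (a : Fin i → ℂ) (c : Fin i)
    (h : ∑ j : Fin i, a (j - c) * exp (2 * π * I * n * (j : ℕ) / i) = 0) :
    ∑ j : Fin i, a j * exp (↑(π * (2 * (j : ℕ) + m) / i) * I) ^ n = 0 := by
  have hi : (i : ℂ) ≠ 0 := Nat.cast_ne_zero.mpr c.pos.ne'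
  have hζ : exp (2 * π * I * n / i) ^ i = 1 := by
    rw [← Complex.exp_nat_mul,
      show (i : ℂ) * (2 * π * I * n / i) = n * (2 * π * I) by field_simp,
      exp_nat_mul_two_pi_mul_I]
  have hpow : ∀ j : Fin i, exp (↑(π * (2 * (j : ℕ) + m) / i) * I) ^ n =
      exp (π * I * n * m / i) * exp (2 * π * I * n / i) ^ (j : ℕ) := by
    intro j
    rw [← Complex.exp_nat_mul, ← Complex.exp_nat_mul, ← Complex.exp_add]
    push_cast
    ring_nf
  simp_rw [exp_two_pi_mul_I_mul_div_eq_pow] at h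
  rw [sum_comp_sub_mul_pow hζ, mul_eq_zero] at h
  simp_rw [hpow, mul_left_comm _ (Complex.exp _), ← mul_sum,
    h.resolve_left (pow_ne_zero _ (exp_ne_zero _)), mul_zero]

lemma cos_le_cos_of_le_of_le_two_pi_sub {a θ : ℝ} (ha : 0 ≤ a) (haθ : a ≤ θ)
    (hθ : θ ≤ 2 * π - a) : Real.cos θ ≤ Real.cos a := by
  rcases le_total θ π with hθπ | hπθ
  · exact cos_le_cos_of_nonneg_of_le_pi ha hθπ haθ
  · rw [← Real.cos_two_pi_sub θ]
    exact cos_le_cos_of_nonneg_of_le_pi ha (by linarith) (by linarith)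

lemma cos_pi_mul_div_lt_cos_pi_div_succ {i d m j : ℕ} (hmi : m ≤ i) (h2 : i < m * (d + 1))
    (hj : j + m ≤ i) : Real.cos (π * (2 * j + m) / i) < Real.cos (π / (d + 1)) := by
  have hi : (0 : ℝ) < i := by
    rcases Nat.eq_zero_or_pos i with rfl | hi
    · simp [Nat.le_zero.mp hmi] at h2
    · exact_mod_cast hi
  have hmi' : (m : ℝ) ≤ i := by exact_mod_cast hmi
  have h2' : (i : ℝ) < m * (d + 1) := by exact_mod_cast h2
  have hj' : (j : ℝ) + m ≤ i := by exact_mod_cast hj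
  have hupper : π * (2 * j + m) / i ≤ 2 * π - π * m / i := by
    rw [show 2 * π - π * m / i = π * (2 * i - m) / i by field_simp]
    gcongr
    linarith
  calc Real.cos (π * (2 * j + m) / i)
      ≤ Real.cos (π * m / i) :=
        cos_le_cos_of_le_of_le_two_pi_sub (by positivity) (by gcongr; linarith) hupper
    _ < Real.cos (π / (d + 1)) := by
        refine cos_lt_cos_of_nonneg_of_le_pi (by positivity) ?_ ?_
        · rw [div_le_iff₀ hi]; gcongr
        · rw [div_lt_div_iff₀ (by positivity) hi]; nlinarith [pi_pos]

theorem projection_nonvanishing_on_orbit_general (i d m : ℕ)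
    (hd : 0 < d)
    (h1 : m * d < i) (h2 : i < m * (d + 1))
    -- `w` lies in the face `Δ^{i−m}`, the convex hull of the vertices `e_0, …, e_{i−m}`
    (w : Fin i → ℝ) (hw : w ∈ stdSimplex ℝ (Fin i))
    (hsupp : ∀ j : Fin i, i - m < (j : ℕ) → w j = 0)
    -- `c` gives an arbitrary element `ξ_i^c` of `C_i`, acting by cyclic permutation
    (c : Fin i) :
    ∃ s : ℕ, 1 ≤ s ∧ s ≤ d ∧
      ∑ j : Fin i, (w (j - c) : ℂ) *
        Complex.exp (2 * Real.pi * Complex.I * (s : ℂ) * (j : ℕ) / (i : ℂ)) ≠ 0 := by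
  have hmi : m ≤ i := (Nat.le_mul_of_pos_right m hd).trans h1.le
  by_contra! hvan
  obtain ⟨j, hwj, hcos⟩ := exists_weight_ne_zero_cos_le_re hd hw
    (fun j => norm_exp_ofReal_mul_I _)
    (fun n hn1 hn2 => sum_mul_exp_pow_eq_zero_of_sum_comp_sub m n _ c (hvan n hn1 hn2))
  rw [exp_ofReal_mul_I_re] at hcos
  have hj : (j : ℕ) + m ≤ i := by
    by_contra hj
    exact hwj (hsupp j (by omega))
  exact (cos_pi_mul_div_lt_cos_pi_div_succ hmi h2 hj).not_ge hcos

/-- Hesselholt–Madsen's nonvanishing: for `m·d < i < m·(d+1)`, the projection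
`π_d = (π_1, …, π_d) : ℝ[C_i] → λ_d` does not vanish on the `C_i`-orbit of the face
`Δ^{i−m} ⊆ Δ^{i−1}` spanned by the vertices `e_0, …, e_{i−m}`. Here
`π_s(u) = ∑_j u_j·exp(2πi·sj/i)`. -/
theorem projection_nonvanishing_on_orbit (i d m : ℕ)
    (hi : 0 < i) (hd : 0 < d) (hm : 0 < m)
    (h1 : m * d < i) (h2 : i < m * (d + 1))
    -- `w` lies in the face `Δ^{i−m}`, the convex hull of the vertices `e_0, …, e_{i−m}`
    (w : Fin i → ℝ) (hw : w ∈ stdSimplex ℝ (Fin i))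
    (hsupp : ∀ j : Fin i, i - m < (j : ℕ) → w j = 0)
    -- `c` gives an arbitrary element `ξ_i^c` of `C_i`, acting by cyclic permutation
    (c : Fin i) :
    ∃ s : ℕ, 1 ≤ s ∧ s ≤ d ∧
      ∑ j : Fin i, (w (j - c) : ℂ) *
        Complex.exp (2 * Real.pi * Complex.I * (s : ℂ) * (j : ℕ) / (i : ℂ)) ≠ 0 :=
  projection_nonvanishing_on_orbit_general i d m hd h1 h2 w hw hsupp c
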